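/- arXiv:math/0512311 — 4 statements merged into one kernel-verified Lean document; each statement's English description precedes it below -/
import Mathlib

section
/- Let M be a graded R[T]-module that is a finite direct sum of cyclic modules M = ⊕_{i∈I} (R[T]/T^{n_i+1}){-l_i} (where {-l} denotes a grading shift and T has degree 2). Suppose there exists l ∈ ℤ such that for every m ≥ 1, multiplication by T^m induces an isomorphism from the degree-(l−m) homogeneous part M_{l−m} onto the degree-(l+m) part M_{l+m}. Then l_i = l − n_i for each i ∈ I. -/
open scoped Classical

/-- `inRange n l0 k` says that the graded cyclic module `(ℝ[T]/T^(n+1)){-l0}`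
(`deg T = 2`, generator in degree `l0`) has a nonzero component in degree `k`,
namely `k ∈ {l0, l0+2, …, l0+2n}`. -/
def inRange (n : ℕ) (l0 : ℤ) (k : ℤ) : Prop := ∃ j : ℕ, j ≤ n ∧ k = l0 + 2 * j

/-- The underlying space of `⊕ i, (ℝ[T]/T^(n i + 1)){-l0 i}`: the coordinate of a vector at
`(i, d)` is its degree-`d` coefficient in the `i`-th cyclic summand. Multiplication by `T`
(a degree `2` operator) shifts coefficients and truncates outside the allowed range. -/
noncomputable def Tmap {I : Type} (n : I → ℕ) (l0 : I → ℤ) :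
    (I × ℤ → ℝ) →ₗ[ℝ] (I × ℤ → ℝ) where
  toFun f := fun p => if inRange (n p.1) (l0 p.1) p.2 then f (p.1, p.2 - 2) else 0
  map_add' f g := by
    funext p; by_cases h : inRange (n p.1) (l0 p.1) p.2 <;> simp [h]
  map_smul' c f := by
    funext p; by_cases h : inRange (n p.1) (l0 p.1) p.2 <;> simp [h]

/-- The degree-`k` homogeneous component of `⊕ i, (ℝ[T]/T^(n i + 1)){-l0 i}`. -/
def comp {I : Type} (n : I → ℕ) (l0 : I → ℤ) (k : ℤ) : Submodule ℝ (I × ℤ → ℝ) where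
  carrier := {f | ∀ p : I × ℤ, f p ≠ 0 → p.2 = k ∧ inRange (n p.1) (l0 p.1) p.2}
  zero_mem' := by intro p hp; simp at hp
  add_mem' := by
    intro f g hf hg p hp
    by_cases h : f p = 0
    · exact hg p (by simpa [h] using hp)
    · exact hf p h
  smul_mem' := by
    intro c f hf p hp
    apply hf p
    intro h
    apply hp
    simp [h]

lemma Tmap_apply {I : Type} (n : I → ℕ) (l0 : I → ℤ) (f : I × ℤ → ℝ) (p : I × ℤ) :
    Tmap n l0 f p = if inRange (n p.1) (l0 p.1) p.2 then f (p.1, p.2 - 2) else 0 := rfl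

lemma mem_comp {I : Type} {n : I → ℕ} {l0 : I → ℤ} {k : ℤ} {f : I × ℤ → ℝ}
    (hf : f ∈ comp n l0 k) (p : I × ℤ) (hp : f p ≠ 0) :
    p.2 = k ∧ inRange (n p.1) (l0 p.1) p.2 := hf p hp

lemma tpow_or {I : Type} (n : I → ℕ) (l0 : I → ℤ) :
    ∀ (m : ℕ) (f : I × ℤ → ℝ) (p : I × ℤ),
      (Tmap n l0 ^ m) f p = f (p.1, p.2 - 2 * m) ∨ (Tmap n l0 ^ m) f p = 0 := by
  intro m
  induction m with
  | zero => intro f p; left; simp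
  | succ m ih =>
    intro f p
    have hrw : (Tmap n l0 ^ (m + 1)) f p = (Tmap n l0 ^ m) (Tmap n l0 f) p := by
      rw [pow_succ]; rfl
    rw [hrw]
    rcases ih (Tmap n l0 f) p with hh | hh
    · rw [hh, Tmap_apply]
      split
      · left
        have : p.2 - 2 * (m : ℤ) - 2 = p.2 - 2 * ((m + 1 : ℕ) : ℤ) := by push_cast; ring
        rw [this]
      · right; rfl
    · right; exact hh

lemma tpow_range {I : Type} (n : I → ℕ) (l0 : I → ℤ) (m : ℕ) (hm : 1 ≤ m)
    (f : I × ℤ → ℝ) (p : I × ℤ) (h : (Tmap n l0 ^ m) f p ≠ 0) :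
    inRange (n p.1) (l0 p.1) p.2 := by
  obtain ⟨m, rfl⟩ : ∃ k, m = k + 1 := ⟨m - 1, by omega⟩
  have hrw : (Tmap n l0 ^ (m + 1)) f p = Tmap n l0 ((Tmap n l0 ^ m) f) p := by
    rw [pow_succ']; rfl
  rw [hrw, Tmap_apply] at h
  by_contra hc
  rw [if_neg hc] at h
  exact h rfl

/-- Let `M = ⊕_{i ∈ I} (ℝ[T]/T^(n i+1)){-l0 i}` be a finite direct sum of
shifted graded cyclic `ℝ[T]`-modules (`deg T = 2`, generator of the `i`-th summand in degree
`l0 i`).  If there is `l : ℤ` such that for every `m ≥ 1` multiplication by `T^m` induces an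
isomorphism (a bijection) from the degree-`(l-m)` component onto the degree-`(l+m)` component,
then `l0 i = l - n i` for every `i`. -/
theorem stmt0 {I : Type} [Fintype I] (n : I → ℕ) (l0 : I → ℤ) (l : ℤ)
    (h : ∀ m : ℕ, 1 ≤ m →
      Set.BijOn (⇑(Tmap n l0 ^ m)) (comp n l0 (l - m) : Set (I × ℤ → ℝ))
        (comp n l0 (l + m) : Set (I × ℤ → ℝ))) :
    ∀ i : I, l0 i = l - n i := by
  intro i
  have h1 : l0 i + n i ≤ l := by
    by_cases hc : l0 i + 2 * n i ≤ l
    · omega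
    · set m : ℕ := (l0 i + 2 * n i - l).toNat with hmdef
      have hm : 1 ≤ m := by omega
      have hm' : (m : ℤ) = l0 i + 2 * n i - l := by omega
      set e : I × ℤ → ℝ := fun p => if p = (i, l + m) then 1 else 0 with hedef
      have he : e ∈ comp n l0 (l + m) := by
        intro p hp
        rw [hedef] at hp
        simp only at hp
        by_cases hpe : p = (i, l + m)
        · subst hpe
          refine ⟨rfl, ⟨n i, le_refl _, by push_cast; omega⟩⟩
        · simp [hpe] at hp
      obtain ⟨f, hf, hTf⟩ := (h m hm).surjOn he
      have hval : (Tmap n l0 ^ m) f (i, l + m) = 1 := by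
        rw [hTf]; simp [hedef]
      rcases tpow_or n l0 m f (i, l + m) with hh | hh
      · rw [hval] at hh
        have hne : f (i, l + (m:ℤ) - 2 * m) ≠ 0 := by rw [← hh]; norm_num
        obtain ⟨-, j, hj, hjeq⟩ := mem_comp hf _ hne
        simp only at hjeq
        omega
      · rw [hval] at hh; norm_num at hh
  have h2 : l ≤ l0 i + n i := by
    by_cases hc : l ≤ l0 i
    · omega
    · set m : ℕ := (l - l0 i).toNat with hmdef
      have hm : 1 ≤ m := by omega
      have hm' : (m : ℤ) = l - l0 i := by omega
      set e : I × ℤ → ℝ := fun p => if p = (i, l - m) then 1 else 0 with hedef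
      have he : e ∈ comp n l0 (l - m) := by
        intro p hp
        rw [hedef] at hp
        simp only at hp
        by_cases hpe : p = (i, l - m)
        · subst hpe
          refine ⟨rfl, ⟨0, Nat.zero_le _, by push_cast; omega⟩⟩
        · simp [hpe] at hp
      have hene : e ≠ 0 := by
        intro h0
        have : e (i, l - m) = 0 := by rw [h0]; rfl
        simp [hedef] at this
      have hTne : (Tmap n l0 ^ m) e ≠ 0 := by
        intro h0
        apply hene
        refine (h m hm).injOn he (Submodule.zero_mem _) ?_
        rw [map_zero, h0]
      obtain ⟨p, hp⟩ := Function.ne_iff.mp hTne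
      simp only [Pi.zero_apply] at hp
      have hir : inRange (n p.1) (l0 p.1) p.2 := tpow_range n l0 m hm e p hp
      rcases tpow_or n l0 m e p with hh | hh
      · rw [hh] at hp
        rw [hedef] at hp
        simp only at hp
        by_cases hpe : (p.1, p.2 - 2 * (m:ℤ)) = (i, l - m)
        · have hp1 : p.1 = i := (Prod.ext_iff.mp hpe).1
          have hp2 : p.2 - 2 * (m:ℤ) = l - m := (Prod.ext_iff.mp hpe).2
          rw [hp1] at hir
          obtain ⟨j, hj, hjeq⟩ := hir
          omega
        · simp [hpe] at hp
      · exact absurd hh hp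
  omega
end

section
/- Let S be a graded polynomial ring over ℝ (with generators in degree 2), let l ∈ ℤ and k_1,…,k_n ≥ 0. Let M = ⊕_i S{−l−k_i} and N = ⊕_i S{−l+k_i} be graded free S-modules. The set of degree-0 S-module homomorphisms f : M → N such that f is injective and f(M_{≤ l+m−1}) ∩ N_{≤ l−m} = 0 for all m ≥ 1 contains a nonempty Zariski-open subset of the finite-dimensional vector space Hom(M, N) of all degree-0 homomorphisms. -/
open MvPolynomial

/-- `entryOK D p` : the polynomial `p ∈ S = ℝ[x₁,…,x_d]` (variables in degree `2`) is
homogeneous of *internal* degree `D`, i.e. `p = 0`, or `D = 2m` and `p` is homogeneous of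
polynomial degree `m`. -/
def entryOK (d : ℕ) (D : ℤ) (p : MvPolynomial (Fin d) ℝ) : Prop :=
  p = 0 ∨ ∃ m : ℕ, D = 2 * m ∧ p.IsHomogeneous m

/-- For the graded free module `⊕ᵢ S{-δ i}` with the generator of the `i`-th summand in
degree `δ i` (coordinates `Fin n → S`), this is the submodule `M_{≤ c}` generated by the
homogeneous elements of degree `≤ c`: those `f` whose `i`-th coordinate vanishes whenever
`δ i > c`. -/
def below (d : ℕ) {n : ℕ} (δ : Fin n → ℤ) (c : ℤ) : Set (Fin n → MvPolynomial (Fin d) ℝ) :=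
  {f | ∀ i, c < δ i → f i = 0}

/-- A degree-`0` graded homomorphism `⊕ᵢ S{-l-k i} → ⊕ⱼ S{-l+k j}` (generators in degrees
`l + k i` resp. `l - k j`) is a matrix whose `(j,i)` entry is homogeneous of internal degree
`k i + k j`. -/
def HomOK (d n : ℕ) (k : Fin n → ℕ) (g : Matrix (Fin n) (Fin n) (MvPolynomial (Fin d) ℝ)) :
    Prop :=
  ∀ j i, entryOK d ((k i : ℤ) + k j) (g j i)

/-- Evaluation of a polynomial `Q` in the (finitely many relevant) coefficients of the matrix
entries; the nonvanishing locus of such a `Q` is a principal Zariski-open subset of the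
finite-dimensional space `Hom(M,N)` of degree-`0` homomorphisms. -/
noncomputable def evalAt (d n : ℕ)
    (g : Matrix (Fin n) (Fin n) (MvPolynomial (Fin d) ℝ))
    (Q : MvPolynomial (Fin n × Fin n × (Fin d →₀ ℕ)) ℝ) : ℝ :=
  MvPolynomial.eval (fun t => MvPolynomial.coeff t.2.2 (g t.1 t.2.1)) Q

noncomputable section Stmt2Aux

/-- Exponent bound finsupp: every exponent equal to `∑ i, k i`. -/
def muMax (d n : ℕ) (k : Fin n → ℕ) : Fin d →₀ ℕ :=
  Finsupp.equivFunOnFinite.symm fun _ => (∑ i, k i)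

/-- The generic matrix, truncated to monomials `≤ muMax`. -/
def genMat (d n : ℕ) (k : Fin n → ℕ) : Matrix (Fin n) (Fin n)
    (MvPolynomial (Fin d) (MvPolynomial (Fin n × Fin n × (Fin d →₀ ℕ)) ℝ)) :=
  fun j i => ∑ μ ∈ Finset.Iic (muMax d n k),
    MvPolynomial.monomial μ (MvPolynomial.X (j, i, μ))

/-- The coefficient polynomial attached to a subset `A`. -/
def cA (d n : ℕ) (k : Fin n → ℕ) (x0 : Fin d) (A : Finset (Fin n)) :
    MvPolynomial (Fin n × Fin n × (Fin d →₀ ℕ)) ℝ :=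
  MvPolynomial.coeff (Finsupp.single x0 (∑ i ∈ A, k i))
    (Matrix.det ((genMat d n k).submatrix (fun a : A => (a : Fin n)) (fun a : A => (a : Fin n))))

def QQ (d n : ℕ) (k : Fin n → ℕ) (x0 : Fin d) :
    MvPolynomial (Fin n × Fin n × (Fin d →₀ ℕ)) ℝ :=
  ∏ A : Finset (Fin n), cA d n k x0 A

lemma supp_le {d n : ℕ} {k : Fin n → ℕ} {g : Matrix (Fin n) (Fin n) (MvPolynomial (Fin d) ℝ)}
    (hg : HomOK d n k g) (j i : Fin n) :
    (g j i).support ⊆ Finset.Iic (muMax d n k) := by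
  rcases hg j i with h0 | ⟨m, hm, hhom⟩
  · simp [h0]
  · intro μ hμ
    have hw : Finsupp.degree μ = m := by
      rw [Finsupp.degree_eq_weight_one]
      exact hhom (MvPolynomial.mem_support_iff.mp hμ)
    have hmB : m ≤ ∑ i, k i := by
      have h1 : k i ≤ ∑ i, k i := Finset.single_le_sum (fun _ _ => Nat.zero_le _) (Finset.mem_univ i)
      have h2 : k j ≤ ∑ i, k i := Finset.single_le_sum (fun _ _ => Nat.zero_le _) (Finset.mem_univ j)
      omega
    rw [Finset.mem_Iic]
    intro a
    have : μ a ≤ Finsupp.degree μ := Finsupp.le_degree a μ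
    simpa [muMax] using le_trans this (hw ▸ hmB)

lemma map_genMat {d n : ℕ} {k : Fin n → ℕ} {g : Matrix (Fin n) (Fin n) (MvPolynomial (Fin d) ℝ)}
    (hg : HomOK d n k g) (j i : Fin n) :
    MvPolynomial.map (MvPolynomial.eval
        (fun t : Fin n × Fin n × (Fin d →₀ ℕ) => MvPolynomial.coeff t.2.2 (g t.1 t.2.1)))
      (genMat d n k j i) = g j i := by
  rw [genMat, map_sum]
  have : ∀ μ ∈ Finset.Iic (muMax d n k),
      MvPolynomial.map (MvPolynomial.eval
        (fun t : Fin n × Fin n × (Fin d →₀ ℕ) => MvPolynomial.coeff t.2.2 (g t.1 t.2.1)))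
        (MvPolynomial.monomial μ (MvPolynomial.X (j, i, μ)))
      = MvPolynomial.monomial μ (MvPolynomial.coeff μ (g j i)) := by
    intro μ _
    rw [MvPolynomial.map_monomial, MvPolynomial.eval_X]
  rw [Finset.sum_congr rfl this]
  have hz : ∀ μ ∈ Finset.Iic (muMax d n k), μ ∉ (g j i).support →
      MvPolynomial.monomial μ (MvPolynomial.coeff μ (g j i)) = 0 := by
    intro μ _ hμ
    rw [MvPolynomial.notMem_support_iff.mp hμ, map_zero]
  rw [← Finset.sum_subset (supp_le hg j i) hz]
  exact ((g j i).as_sum).symm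

lemma evalAt_cA {d n : ℕ} {k : Fin n → ℕ} {g : Matrix (Fin n) (Fin n) (MvPolynomial (Fin d) ℝ)}
    (hg : HomOK d n k g) (x0 : Fin d) (A : Finset (Fin n)) :
    evalAt d n g (cA d n k x0 A) =
      MvPolynomial.coeff (Finsupp.single x0 (∑ i ∈ A, k i))
        (Matrix.det (g.submatrix (fun a : A => (a : Fin n)) (fun a : A => (a : Fin n)))) := by
  set φ : (Fin n × Fin n × (Fin d →₀ ℕ)) → ℝ :=
    fun t => MvPolynomial.coeff t.2.2 (g t.1 t.2.1) with hφ
  have : evalAt d n g (cA d n k x0 A) =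
      MvPolynomial.coeff (Finsupp.single x0 (∑ i ∈ A, k i))
        (MvPolynomial.map (MvPolynomial.eval φ)
          (Matrix.det ((genMat d n k).submatrix (fun a : A => (a : Fin n))
            (fun a : A => (a : Fin n))))) := by
    rw [MvPolynomial.coeff_map]; rfl
  rw [this, RingHom.map_det]
  have hmat : ((genMat d n k).submatrix (fun a : A => (a : Fin n)) (fun a : A => (a : Fin n))).map
      (MvPolynomial.map (MvPolynomial.eval φ))
      = g.submatrix (fun a : A => (a : Fin n)) (fun a : A => (a : Fin n)) := by
    funext a b
    exact map_genMat hg (a : Fin n) (b : Fin n)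
  rw [RingHom.mapMatrix_apply, hmat]

lemma mulVec_inj {R : Type*} [CommRing R] [IsDomain R] {m : Type*} [Fintype m] [DecidableEq m]
    (M : Matrix m m R) (h : M.det ≠ 0) : Function.Injective M.mulVec := by
  intro u v huv
  have h2 : M.mulVec (u - v) = 0 := by
    rw [Matrix.mulVec_sub, huv, sub_self]
  have h3 : M.det • (u - v) = 0 := by
    have := congrArg (Matrix.adjugate M).mulVec h2
    rwa [Matrix.mulVec_mulVec, Matrix.adjugate_mul, Matrix.smul_mulVec,
      Matrix.one_mulVec, Matrix.mulVec_zero] at this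
  have : u - v = 0 := by
    funext i
    have := congrFun h3 i
    simp only [Pi.smul_apply, smul_eq_mul, Pi.zero_apply] at this
    rcases mul_eq_zero.mp this with h' | h'
    · exact absurd h' h
    · exact h'
  exact sub_eq_zero.mp this

end Stmt2Aux

lemma evalAt_QQ {d n : ℕ} {k : Fin n → ℕ} {g : Matrix (Fin n) (Fin n) (MvPolynomial (Fin d) ℝ)}
    (hg : HomOK d n k g) (x0 : Fin d) :
    evalAt d n g (QQ d n k x0) =
      ∏ A : Finset (Fin n),
        MvPolynomial.coeff (Finsupp.single x0 (∑ i ∈ A, k i))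
          (Matrix.det (g.submatrix (fun a : A => (a : Fin n)) (fun a : A => (a : Fin n)))) := by
  have : evalAt d n g (QQ d n k x0) = ∏ A : Finset (Fin n), evalAt d n g (cA d n k x0 A) := by
    unfold evalAt QQ
    exact map_prod _ _ _
  rw [this]
  exact Finset.prod_congr rfl fun A _ => evalAt_cA hg x0 A


/-- Let `S = ℝ[x₁,…,x_d]` (`d ≥ 1`) graded with the variables in degree `2`,
`l ∈ ℤ` and `k₁,…,k_n ≥ 0`.  Let `M = ⊕ᵢ S{-l-k i}` and `N = ⊕ᵢ S{-l+k i}`.  The set of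
degree-`0` homomorphisms `f : M → N` such that `f` is injective and
`f(M_{≤ l+m-1}) ∩ N_{≤ l-m} = 0` for all `m ≥ 1` contains a nonempty Zariski-open subset of
`Hom(M,N)`: there is a polynomial `Q` in the matrix coefficients, not vanishing identically
on `Hom(M,N)`, whose nonvanishing locus consists of such `f`. -/
theorem stmt2 (d n : ℕ) (hd : 1 ≤ d) (l : ℤ) (k : Fin n → ℕ) :
    ∃ Q : MvPolynomial (Fin n × Fin n × (Fin d →₀ ℕ)) ℝ,
      (∃ g, HomOK d n k g ∧ evalAt d n g Q ≠ 0) ∧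
      (∀ g, HomOK d n k g → evalAt d n g Q ≠ 0 →
        Function.Injective g.mulVec ∧
        ∀ m : ℕ, 1 ≤ m → ∀ u ∈ below d (fun i => l + k i) (l + m - 1),
          g.mulVec u ∈ below d (fun i => l - k i) (l - m) → g.mulVec u = 0) := by
  set x0 : Fin d := ⟨0, hd⟩
  refine ⟨QQ d n k x0, ?_, ?_⟩
  · -- the diagonal witness
    set g : Matrix (Fin n) (Fin n) (MvPolynomial (Fin d) ℝ) :=
      Matrix.diagonal (fun i => MvPolynomial.X x0 ^ k i) with hgdef
    have hg : HomOK d n k g := by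
      intro j i
      by_cases h : j = i
      · subst h
        right
        refine ⟨k j, by ring, ?_⟩
        have : g j j = MvPolynomial.X x0 ^ k j := Matrix.diagonal_apply_eq _ j
        rw [this]
        exact MvPolynomial.isHomogeneous_X_pow x0 (k j)
      · left
        exact Matrix.diagonal_apply_ne _ h
    refine ⟨g, hg, ?_⟩
    rw [evalAt_QQ hg x0]
    rw [Finset.prod_ne_zero_iff]
    intro A _
    have hsub : g.submatrix (fun a : A => (a : Fin n)) (fun a : A => (a : Fin n)) =
        Matrix.diagonal (fun a : A => MvPolynomial.X x0 ^ k (a : Fin n)) :=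
      Matrix.submatrix_diagonal _ _ Subtype.coe_injective
    rw [hsub, Matrix.det_diagonal]
    have : (∏ a : A, MvPolynomial.X (R := ℝ) x0 ^ k (a : Fin n)) =
        MvPolynomial.X x0 ^ (∑ i ∈ A, k i) := by
      rw [Finset.prod_pow_eq_pow_sum]
      congr 1
      exact Finset.sum_attach A k
    rw [this, MvPolynomial.X_pow_eq_monomial, MvPolynomial.coeff_monomial]
    simp
  · intro g hg hQ
    rw [evalAt_QQ hg x0, Finset.prod_ne_zero_iff] at hQ
    have hdet : ∀ A : Finset (Fin n),
        (g.submatrix (fun a : A => (a : Fin n)) (fun a : A => (a : Fin n))).det ≠ 0 := by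
      intro A h
      exact hQ A (Finset.mem_univ A) (by rw [h]; simp)
    constructor
    · -- injectivity from A = univ
      have h2 : (g.submatrix (fun a : (Finset.univ : Finset (Fin n)) => (a : Fin n))
          (fun a : (Finset.univ : Finset (Fin n)) => (a : Fin n))).det = g.det :=
        Matrix.det_submatrix_equiv_self (Equiv.subtypeUnivEquiv Finset.mem_univ) g
      exact mulVec_inj g (h2 ▸ hdet Finset.univ)
    · intro m hm u hu hv
      set A : Finset (Fin n) := Finset.univ.filter (fun i => k i < m) with hA
      have hu0 : ∀ i, ¬ k i < m → u i = 0 := by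
        intro i hi
        exact hu i (by push_cast; omega)
      have hmv : (g.submatrix (fun a : A => (a : Fin n)) (fun a : A => (a : Fin n))).mulVec
          (fun a : {x // x ∈ A} => u (a : Fin n)) = 0 := by
        funext j
        show (∑ b : {x // x ∈ A}, g (j : Fin n) (b : Fin n) * u (b : Fin n)) = 0
        have hj : k (j : Fin n) < m := (Finset.mem_filter.mp j.2).2
        have hstep : (∑ b : {x // x ∈ A}, g (j : Fin n) (b : Fin n) * u (b : Fin n))
            = ∑ i, g (j : Fin n) i * u i := by
          rw [Finset.sum_coe_sort A (fun i => g (j : Fin n) i * u i)]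
          refine Finset.sum_subset (Finset.subset_univ A) ?_
          intro i _ hiA
          have : ¬ k i < m := by
            intro h
            exact hiA (Finset.mem_filter.mpr ⟨Finset.mem_univ i, h⟩)
          rw [hu0 i this, mul_zero]
        have hgu : g.mulVec u (j : Fin n) = 0 := hv (j : Fin n) (by push_cast; omega)
        rw [hstep]
        exact hgu
      have hv0 : (fun a : {x // x ∈ A} => u (a : Fin n)) = 0 :=
        mulVec_inj _ (hdet A) (hmv.trans (Matrix.mulVec_zero _).symm)
      have hu' : u = 0 := by
        funext i
        by_cases h : k i < m
        · have : (⟨i, Finset.mem_filter.mpr ⟨Finset.mem_univ i, h⟩⟩ : {x // x ∈ A}) ∈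
              (Finset.univ : Finset {x // x ∈ A}) := Finset.mem_univ _
          exact congrFun hv0 ⟨i, Finset.mem_filter.mpr ⟨Finset.mem_univ i, h⟩⟩
        · exact hu0 i h
      rw [hu', Matrix.mulVec_zero]
end

section
/- For any x in a Coxeter group W there exists a unique element C'_x = Σ_y h_{y,x}(v)·T̃_y in the Hecke algebra such that: (1) d(C'_x) = C'_x; (2) h_{y,x} = 0 unless y ≤ x in Bruhat order, and h_{x,x} = 1; (3) h_{y,x}(v) ∈ vℤ[v] for y < x. (Uniqueness part: any two elements with these properties are equal.) -/
/-!
Uniqueness: the difference `D` of two such elements is `d`-invariant with every `h_y(D)` in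
`vℤ[v]`. Since `d(T_z) = v^{2ℓ(z)} T_z + (terms of smaller length)`, comparing coefficients
at an element `y` of maximal length in the support of `D` gives `h_y(D) = h_y(D)(v⁻¹)`, which
forces `h_y(D) = 0` for an element of `vℤ[v]`.

Existence, by induction on `ℓ(x)`: for `x = s x'` with `x' < x`, the product `C'_s C'_{x'}` is
`d`-invariant, supported on the Bruhat interval below `x` by the lifting property, and has all
`h_y ∈ ℤ[v]`; subtracting `μ_y C'_y`, with `μ_y` the constant term of `h_y`, gives `C'_x`. The
lifting property comes from the strong exchange condition, which follows once an action of `W`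
on `W × {±1}` shows that the parity of the number of occurrences of a reflection in the left
inversion sequence of a word depends only on the element the word represents.
-/

open LaurentPolynomial

/-- The Bruhat order on a Coxeter group: `y ≤ x` iff `x` can be obtained from `y` by
successively multiplying by reflections, increasing the length at each step. -/
def bruhatLE {B W : Type} [Group W] {M : CoxeterMatrix B} (cs : CoxeterSystem M W)
    (y x : W) : Prop :=
  Relation.ReflTransGen
    (fun a c => cs.length a < cs.length c ∧ ∃ t : W, cs.IsReflection t ∧ c = t * a) y x

/-- The submodule `vℤ[v] ⊆ ℤ[v,v⁻¹]` of polynomials in `v` with zero constant term: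
the `ℤ`-span of `v, v², v³, …`. -/
noncomputable def vZv : Submodule ℤ (LaurentPolynomial ℤ) :=
  Submodule.span ℤ {q : LaurentPolynomial ℤ | ∃ n : ℕ, q = T ((n : ℤ) + 1)}

namespace CoxeterSystem

variable {B W : Type} [Group W] {M : CoxeterMatrix B} (cs : CoxeterSystem M W)

lemma leftInvSeq_alternatingWord (i j : B) (p : ℕ) :
    cs.leftInvSeq (alternatingWord i j (2 * p)) =
      (List.range (2 * p)).map fun k => cs.simple i * (cs.simple j * cs.simple i) ^ k := by
  refine List.ext_getElem (by simp) fun k hk _ => ?_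
  rw [getElem_leftInvSeq_alternatingWord cs i j p k (by simpa using hk),
    prod_alternatingWord_eq_mul_pow]
  simp [Nat.not_even_bit1, show (2 * k + 1) / 2 = k by omega]

lemma simple_mul_mul_simple_eq_simple_iff (i : B) (t : W) :
    cs.simple i * t * cs.simple i = cs.simple i ↔ t = cs.simple i := by
  simpa [MulAut.conj_apply, inv_simple, mul_assoc] using
    (MulAut.conj (cs.simple i)).injective.eq_iff (a := t) (b := cs.simple i)

section SignedAction

variable [DecidableEq W]

/-- The action of `s_i` on pairs (reflection, sign) from the classical proof of the strong
exchange condition. -/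
def signedSimple (i : B) : Equiv.Perm (W × ℤˣ) :=
  Function.Involutive.toPerm
    (fun p => (cs.simple i * p.1 * cs.simple i, if p.1 = cs.simple i then -p.2 else p.2))
    (by
      rintro ⟨t, ε⟩
      simp only [Prod.mk.injEq, simple_mul_mul_simple_eq_simple_iff]
      exact ⟨by simp [mul_assoc], by split_ifs <;> simp⟩)

@[simp] lemma signedSimple_apply (i : B) (t : W) (ε : ℤˣ) :
    cs.signedSimple i (t, ε) =
      (cs.simple i * t * cs.simple i, if t = cs.simple i then -ε else ε) := rfl

lemma prod_map_signedSimple_apply (ω : List B) (t : W) (ε : ℤˣ) :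
    (ω.map cs.signedSimple).prod ((cs.wordProd ω)⁻¹ * t * cs.wordProd ω, ε) =
      (t, (-1) ^ (cs.leftInvSeq ω).count t * ε) := by
  induction ω generalizing t with
  | nil => simp
  | cons i ω ih =>
    have hconj : MulAut.conj (cs.simple i) (cs.simple i * t * cs.simple i) = t := by
      simp [mul_assoc]
    have key := ih (cs.simple i * t * cs.simple i)
    have hcount : (cs.leftInvSeq (i :: ω)).count t =
        (cs.leftInvSeq ω).count (cs.simple i * t * cs.simple i) +
          if cs.simple i = t then 1 else 0 := by
      rw [leftInvSeq, List.count_cons, ← hconj,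
        List.count_map_of_injective _ _ (MulAut.conj (cs.simple i)).injective, hconj]
      simp
    rw [List.map_cons, List.prod_cons, Equiv.Perm.mul_apply, wordProd_cons, mul_inv_rev,
      inv_simple, show (cs.wordProd ω)⁻¹ * cs.simple i * t * (cs.simple i * cs.wordProd ω) =
        (cs.wordProd ω)⁻¹ * (cs.simple i * t * cs.simple i) * cs.wordProd ω by group, key,
      hcount]
    by_cases h : t = cs.simple i
    · simp [h, pow_succ]
    · rw [signedSimple_apply, if_neg (mt (cs.simple_mul_mul_simple_eq_simple_iff i t).mp h),
        if_neg (Ne.symm h)]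
      simp [mul_assoc]

lemma prod_map_signedSimple_alternatingWord (i j : B) (k : ℕ) :
    ((alternatingWord i j (2 * k)).map cs.signedSimple).prod =
      (cs.signedSimple i * cs.signedSimple j) ^ k := by
  induction k with
  | zero => simp [alternatingWord]
  | succ k ih =>
    rw [show 2 * (k + 1) = 2 * k + 1 + 1 by ring, alternatingWord_succ', alternatingWord_succ']
    simp [Nat.not_even_bit1, ih, pow_succ', mul_assoc]

-- The left inversion sequence of the braid word of length `2 m` is `L ++ L`.
lemma isLiftable_signedSimple : M.IsLiftable cs.signedSimple := by
  intro i j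
  ext ⟨t, ε⟩ : 1
  have hπ : cs.wordProd (alternatingWord i j (2 * M i j)) = 1 := by
    simp [prod_alternatingWord_eq_mul_pow, cs.simple_mul_simple_pow]
  have hsign := cs.prod_map_signedSimple_apply (alternatingWord i j (2 * M i j)) t ε
  have heven : Even ((cs.leftInvSeq (alternatingWord i j (2 * M i j))).count t) := by
    have hperiod : (fun k => cs.simple i * (cs.simple j * cs.simple i) ^ k) ∘ (M i j + ·) =
        fun k => cs.simple i * (cs.simple j * cs.simple i) ^ k := by
      ext k
      simp [pow_add]
    rw [leftInvSeq_alternatingWord, two_mul, List.range_add, List.map_append, List.map_map,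
      hperiod, List.count_append]
    exact ⟨_, rfl⟩
  rw [hπ, inv_one, one_mul, mul_one, heven.neg_one_pow, one_mul] at hsign
  rw [← prod_map_signedSimple_alternatingWord, hsign]
  rfl

def signedAction : W →* Equiv.Perm (W × ℤˣ) :=
  cs.lift ⟨cs.signedSimple, cs.isLiftable_signedSimple⟩

lemma signedAction_wordProd (ω : List B) :
    cs.signedAction (cs.wordProd ω) = (ω.map cs.signedSimple).prod := by
  rw [wordProd, map_list_prod, List.map_map]
  congr 1
  exact List.map_congr_left fun i _ => cs.lift_apply_simple _ i

/-- `-1` iff `t` occurs an odd number of times in the left inversion sequence of one, equivalently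
every, word for `w` (`inversionSign_wordProd`). -/
def inversionSign (w t : W) : ℤˣ := (cs.signedAction w (w⁻¹ * t * w, 1)).2

lemma inversionSign_wordProd (ω : List B) (t : W) :
    cs.inversionSign (cs.wordProd ω) t = (-1) ^ (cs.leftInvSeq ω).count t := by
  simp [inversionSign, signedAction_wordProd, prod_map_signedSimple_apply]

lemma signedAction_apply (w t : W) (ε : ℤˣ) :
    cs.signedAction w (w⁻¹ * t * w, ε) = (t, cs.inversionSign w t * ε) := by
  obtain ⟨ω, rfl⟩ := cs.wordProd_surjective w
  rw [inversionSign_wordProd, signedAction_wordProd, prod_map_signedSimple_apply]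

lemma inversionSign_mul (u v t : W) :
    cs.inversionSign (u * v) t = cs.inversionSign u t * cs.inversionSign v (u⁻¹ * t * u) := by
  have h := cs.signedAction_apply (u * v) t 1
  rw [map_mul, Equiv.Perm.mul_apply,
    show (u * v)⁻¹ * t * (u * v) = v⁻¹ * (u⁻¹ * t * u) * v by group, signedAction_apply,
    signedAction_apply, mul_one] at h
  simpa using (congrArg Prod.snd h).symm

lemma inversionSign_one (t : W) : cs.inversionSign 1 t = 1 := by
  simpa using cs.inversionSign_wordProd [] t

lemma inversionSign_simple_self (i : B) : cs.inversionSign (cs.simple i) (cs.simple i) = -1 := by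
  simpa using cs.inversionSign_wordProd [i] (cs.simple i)

lemma inversionSign_self {t : W} (ht : cs.IsReflection t) : cs.inversionSign t t = -1 := by
  obtain ⟨u, i, rfl⟩ := ht
  have hu : u⁻¹ * (u * cs.simple i * u⁻¹) * u = cs.simple i := by group
  have hus : (u * cs.simple i)⁻¹ * (u * cs.simple i * u⁻¹) * (u * cs.simple i) =
      cs.simple i := by
    simp [mul_assoc]
  have hcancel := cs.inversionSign_mul u u⁻¹ (u * cs.simple i * u⁻¹)
  rw [mul_inv_cancel, inversionSign_one, hu] at hcancel
  rw [inversionSign_mul, inversionSign_mul, hu, hus, inversionSign_simple_self, mul_neg_one,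
    neg_mul, ← hcancel]

end SignedAction

-- Writing `w = t * (t * w)`, `inversionSign_mul` gives `t` opposite signs at `w` and `t * w`,
-- and the sign `-1` at `t * w` would make `t` a left inversion of `t * w` as well.
theorem mem_leftInvSeq_of_isLeftInversion (ω : List B) {t : W}
    (ht : cs.IsLeftInversion (cs.wordProd ω) t) : t ∈ cs.leftInvSeq ω := by
  classical
  obtain ⟨δ, hδ, hδω⟩ := cs.exists_isReduced (t * cs.wordProd ω)
  have hsplit : cs.wordProd ω = t * cs.wordProd δ := by
    rw [← hδω, ← mul_assoc, ht.1.mul_self, one_mul]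
  have hsign : cs.inversionSign (cs.wordProd δ) t = -cs.inversionSign (cs.wordProd ω) t := by
    rw [hsplit, inversionSign_mul, inversionSign_self cs ht.1, ht.1.inv, ht.1.mul_self, one_mul]
    simp
  by_contra hnot
  have hδt : t ∈ cs.leftInvSeq δ := by
    by_contra hnot'
    rw [inversionSign_wordProd, inversionSign_wordProd, List.count_eq_zero_of_not_mem hnot,
      List.count_eq_zero_of_not_mem hnot'] at hsign
    simp at hsign
  have := (cs.isLeftInversion_of_mem_leftInvSeq hδ hδt).2
  rw [← hδω, ← mul_assoc, ht.1.mul_self, one_mul] at this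
  exact absurd ht.2 (not_lt.mpr this.le)

theorem exists_eraseIdx_of_isLeftInversion (ω : List B) {t : W}
    (ht : cs.IsLeftInversion (cs.wordProd ω) t) :
    ∃ j < ω.length, t * cs.wordProd ω = cs.wordProd (ω.eraseIdx j) := by
  obtain ⟨j, hj, rfl⟩ := List.getElem_of_mem (cs.mem_leftInvSeq_of_isLeftInversion ω ht)
  rw [length_leftInvSeq] at hj
  exact ⟨j, hj, by simpa [List.getD_eq_getElem, hj] using cs.getD_leftInvSeq_mul_wordProd ω j⟩

lemma bruhatLE_refl (x : W) : bruhatLE cs x x := .refl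

lemma bruhatLE_trans {x y z : W} (hxy : bruhatLE cs x y) (hyz : bruhatLE cs y z) :
    bruhatLE cs x z :=
  Relation.ReflTransGen.trans hxy hyz

lemma length_le_of_bruhatLE {y x : W} (h : bruhatLE cs y x) : cs.length y ≤ cs.length x := by
  induction h with
  | refl => rfl
  | tail _ hstep ih => exact ih.trans hstep.1.le

lemma eq_or_length_lt_of_bruhatLE {y x : W} (h : bruhatLE cs y x) :
    y = x ∨ cs.length y < cs.length x := by
  induction h using Relation.ReflTransGen.head_induction_on with
  | refl => exact .inl rfl
  | head hstep hrest _ => exact .inr (hstep.1.trans_le (cs.length_le_of_bruhatLE hrest))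

lemma bruhatLE_mul_of_isReflection {t y : W} (ht : cs.IsReflection t)
    (h : cs.length y < cs.length (t * y)) : bruhatLE cs y (t * y) :=
  .single ⟨h, t, ht, rfl⟩

lemma bruhatLE_simple_mul {i : B} {y : W} (h : ¬cs.IsLeftDescent y i) :
    bruhatLE cs y (cs.simple i * y) :=
  cs.bruhatLE_mul_of_isReflection (cs.isReflection_simple i)
    (by rw [cs.not_isLeftDescent_iff.mp h]; omega)

lemma simple_mul_bruhatLE {i : B} {y : W} (h : cs.IsLeftDescent y i) :
    bruhatLE cs (cs.simple i * y) y := by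
  simpa using cs.bruhatLE_simple_mul (cs.isLeftDescent_iff_not_isLeftDescent_mul.mp h)

lemma wordProd_eraseIdx_bruhatLE {ω : List B} (hω : cs.IsReduced ω) {j : ℕ}
    (hj : j < ω.length) : bruhatLE cs (cs.wordProd (ω.eraseIdx j)) (cs.wordProd ω) := by
  set t := (cs.leftInvSeq ω).getD j 1
  have ht : cs.IsReflection t := cs.isReflection_of_mem_leftInvSeq ω <| by
    simp [t, hj]
  have herase : cs.wordProd ω = t * cs.wordProd (ω.eraseIdx j) := by
    rw [← cs.getD_leftInvSeq_mul_wordProd ω j, ← mul_assoc, ht.mul_self, one_mul]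
  have hlen : cs.length (cs.wordProd (ω.eraseIdx j)) < cs.length (cs.wordProd ω) := by
    have := cs.length_wordProd_le (ω.eraseIdx j)
    rw [List.length_eraseIdx_of_lt hj] at this
    rw [hω]
    omega
  exact .single ⟨hlen, t, ht, herase⟩

lemma simple_mul_bruhatLE_of_isLeftDescent {t u : W} (ht : cs.IsReflection t) {i : B}
    (hlen : cs.length u < cs.length (t * u)) (hi : cs.IsLeftDescent (t * u) i) :
    bruhatLE cs (cs.simple i * u) (t * u) := by
  obtain ⟨δ, hδ, hδu⟩ := cs.exists_isReduced (cs.simple i * (t * u))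
  have hword : cs.wordProd (i :: δ) = t * u := by
    rw [wordProd_cons, ← hδu, simple_mul_simple_cancel_left]
  have hinv : cs.IsLeftInversion (cs.wordProd (i :: δ)) t :=
    ⟨ht, by rwa [hword, ← mul_assoc, ht.mul_self, one_mul]⟩
  obtain ⟨j, hj, hex⟩ := cs.exists_eraseIdx_of_isLeftInversion (i :: δ) hinv
  rw [hword, ← mul_assoc, ht.mul_self, one_mul] at hex
  rcases j with _ | k
  · have hsu : cs.simple i * u = t * u := by
      rw [← hword, wordProd_cons, hex, List.eraseIdx_cons_zero]
    rw [hsu]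
    exact cs.bruhatLE_refl _
  · have hsu : cs.simple i * u = cs.wordProd (δ.eraseIdx k) := by
      rw [hex, List.eraseIdx_cons_succ, wordProd_cons, simple_mul_simple_cancel_left]
    rw [hsu]
    refine cs.bruhatLE_trans (cs.wordProd_eraseIdx_bruhatLE hδ (by simpa using hj)) ?_
    rw [← hδu]
    exact cs.simple_mul_bruhatLE hi

theorem bruhatLE_simple_mul_simple_mul {u w : W} (h : bruhatLE cs u w) {i : B}
    (hu : ¬cs.IsLeftDescent u i) (hw : ¬cs.IsLeftDescent w i) :
    bruhatLE cs (cs.simple i * u) (cs.simple i * w) := by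
  induction h using Relation.ReflTransGen.head_induction_on with
  | refl => exact cs.bruhatLE_refl _
  | @head a c hac _ ih =>
    obtain ⟨hlt, t, ht, rfl⟩ := hac
    by_cases hta : cs.IsLeftDescent (t * a) i
    · exact cs.bruhatLE_trans (cs.simple_mul_bruhatLE_of_isLeftDescent ht hlt hta)
        (cs.bruhatLE_trans ‹_› (cs.bruhatLE_simple_mul hw))
    · have hconj : cs.simple i * (t * a) =
          (cs.simple i * t * (cs.simple i)⁻¹) * (cs.simple i * a) := by group
      have hstep : cs.length (cs.simple i * a) < cs.length (cs.simple i * (t * a)) := by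
        rw [cs.not_isLeftDescent_iff.mp hu, cs.not_isLeftDescent_iff.mp hta]
        omega
      refine cs.bruhatLE_trans ?_ (ih hta)
      rw [hconj] at hstep ⊢
      exact cs.bruhatLE_mul_of_isReflection (ht.conj _) hstep

lemma bruhatLE_simple_mul_of_simple_mul_bruhatLE {z w : W} {i : B}
    (h : bruhatLE cs (cs.simple i * z) w) (hw : ¬cs.IsLeftDescent w i) :
    bruhatLE cs z (cs.simple i * w) := by
  by_cases hz : cs.IsLeftDescent z i
  · simpa using cs.bruhatLE_simple_mul_simple_mul h
      (cs.isLeftDescent_iff_not_isLeftDescent_mul.mp hz) hw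
  · exact cs.bruhatLE_trans (cs.bruhatLE_simple_mul hz)
      (cs.bruhatLE_trans h (cs.bruhatLE_simple_mul hw))

open Classical in
noncomputable def ascentSign (i : B) (w : W) : ℤ := if cs.IsLeftDescent w i then -1 else 1

lemma length_simple_mul_eq_add_ascentSign (i : B) (w : W) :
    (cs.length (cs.simple i * w) : ℤ) = cs.length w + cs.ascentSign i w := by
  by_cases h : cs.IsLeftDescent w i
  · have := cs.isLeftDescent_iff.mp h
    simp only [ascentSign, if_pos h]
    omega
  · have := cs.not_isLeftDescent_iff.mp h
    simp only [ascentSign, if_neg h]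
    omega

lemma ascentSign_simple_mul (i : B) (w : W) :
    cs.ascentSign i (cs.simple i * w) = -cs.ascentSign i w := by
  have h1 := cs.length_simple_mul_eq_add_ascentSign i w
  have h2 := cs.length_simple_mul_eq_add_ascentSign i (cs.simple i * w)
  rw [simple_mul_simple_cancel_left] at h2
  omega

end CoxeterSystem

noncomputable def Zv : Submodule ℤ (ℤ[T;T⁻¹]) :=
  Submodule.span ℤ {q : ℤ[T;T⁻¹] | ∃ n : ℕ, q = T n}

lemma T_mem_Zv (n : ℕ) : (T n : ℤ[T;T⁻¹]) ∈ Zv :=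
  Submodule.subset_span ⟨n, rfl⟩

lemma T_add_one_mem_vZv (n : ℕ) : (T ((n : ℤ) + 1) : ℤ[T;T⁻¹]) ∈ vZv :=
  Submodule.subset_span ⟨n, rfl⟩

lemma one_mem_Zv : (1 : ℤ[T;T⁻¹]) ∈ Zv := by
  simpa using T_mem_Zv 0

lemma vZv_le_Zv : vZv ≤ Zv :=
  Submodule.span_le.mpr <| by
    rintro _ ⟨n, rfl⟩
    exact_mod_cast T_mem_Zv (n + 1)

lemma T_one_mul_mem_vZv {p : ℤ[T;T⁻¹]} (hp : p ∈ Zv) : T 1 * p ∈ vZv :=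
  (Submodule.span_le (p := vZv.comap (LinearMap.mulLeft ℤ (T 1)))).mpr
    (by
      rintro _ ⟨n, rfl⟩
      change T 1 * T (n : ℤ) ∈ vZv
      rw [← T_add, add_comm]
      exact T_add_one_mem_vZv n) hp

lemma T_neg_one_mul_mem_Zv {p : ℤ[T;T⁻¹]} (hp : p ∈ vZv) : T (-1) * p ∈ Zv :=
  (Submodule.span_le (p := Zv.comap (LinearMap.mulLeft ℤ (T (-1))))).mpr
    (by
      rintro _ ⟨n, rfl⟩
      change T (-1) * T ((n : ℤ) + 1) ∈ Zv
      rw [← T_add, neg_add_cancel_comm_assoc]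
      exact T_mem_Zv n) hp

lemma sub_coeff_zero_mem_vZv {p : ℤ[T;T⁻¹]} (hp : p ∈ Zv) :
    p - (p.coeff 0 : ℤ[T;T⁻¹]) ∈ vZv := by
  induction hp using Submodule.span_induction with
  | mem q hq =>
    obtain ⟨n, rfl⟩ := hq
    rcases n with _ | n
    · simp
    · rw [T_apply, if_neg (by omega), Int.cast_zero, sub_zero]
      exact_mod_cast T_add_one_mem_vZv n
  | zero => simp
  | add p q _ _ hp hq =>
    convert add_mem hp hq using 1
    rw [AddMonoidAlgebra.coeff_add, Finsupp.add_apply, Int.cast_add]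
    abel
  | smul n p _ hp =>
    convert Submodule.smul_mem _ n hp using 1
    rw [AddMonoidAlgebra.coeff_smul, Finsupp.smul_apply, smul_sub, smul_eq_mul, Int.cast_mul,
      zsmul_eq_mul, zsmul_eq_mul]

lemma coeff_eq_zero_of_mem_vZv {p : ℤ[T;T⁻¹]} (hp : p ∈ vZv) {k : ℤ} (hk : k ≤ 0) :
    p.coeff k = 0 := by
  induction hp using Submodule.span_induction with
  | mem q hq =>
    obtain ⟨n, rfl⟩ := hq
    simp [T_apply]
    omega
  | zero => simp
  | add p q _ _ hp hq => simp [hp, hq]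
  | smul n p _ hp => rw [AddMonoidAlgebra.coeff_smul_apply, hp, smul_zero]

lemma eq_zero_of_mem_vZv_of_invert_eq {p : ℤ[T;T⁻¹]} (hp : p ∈ vZv)
    (hinv : invert p = p) : p = 0 := by
  ext k
  rcases le_or_gt k 0 with hk | hk
  · exact coeff_eq_zero_of_mem_vZv hp hk
  · rw [← hinv, invert_apply]
    exact coeff_eq_zero_of_mem_vZv hp (by omega)

section HeckeAlgebra

variable {B W : Type} [Group W] {M : CoxeterMatrix B} (cs : CoxeterSystem M W)
  {H : Type} [Ring H] [Algebra (ℤ[T;T⁻¹]) H]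

structure IsHeckeBasis (b : Module.Basis W (ℤ[T;T⁻¹]) H) : Prop where
  one : b 1 = 1
  mul_of_length_add : ∀ x y : W, cs.length (x * y) = cs.length x + cs.length y →
    b x * b y = b (x * y)
  simple_mul_self : ∀ i : B, b (cs.simple i) * b (cs.simple i) =
    (T (-2) : ℤ[T;T⁻¹]) • (1 : H) + (T (-2) - 1 : ℤ[T;T⁻¹]) • b (cs.simple i)

structure IsKLInvolution (b : Module.Basis W (ℤ[T;T⁻¹]) H) (d : H →+* H) : Prop where
  map_smul_invert : ∀ (r : ℤ[T;T⁻¹]) (x : H), d (r • x) = invert r • d x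
  basis_inv_mul : ∀ w : W, b w⁻¹ * d (b w) = 1

variable (b : Module.Basis W (ℤ[T;T⁻¹]) H)

/-- The coefficient `h_y` of `T̃_y = v ^ ℓ(y) • T_y` in an element of `H`. -/
noncomputable def tildeCoeff (y : W) :
    H →ₗ[ℤ[T;T⁻¹]] ℤ[T;T⁻¹] :=
  (T (-(cs.length y : ℤ)) : ℤ[T;T⁻¹]) • b.coord y

@[simp] lemma tildeCoeff_apply (y : W) (C : H) :
    tildeCoeff cs b y C = T (-(cs.length y : ℤ)) * b.repr C y := rfl

/-- The Kazhdan–Lusztig element `C'_s = v (T_s + 1)`. -/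
noncomputable def klSimple (i : B) : H :=
  (T 1 : ℤ[T;T⁻¹]) • (b (cs.simple i) + 1)

variable {cs b}

namespace IsHeckeBasis

variable (hb : IsHeckeBasis cs b)
include hb

lemma simple_mul_of_not_isLeftDescent {i : B} {y : W} (h : ¬cs.IsLeftDescent y i) :
    b (cs.simple i) * b y = b (cs.simple i * y) :=
  hb.mul_of_length_add _ _ (by rw [cs.not_isLeftDescent_iff.mp h, cs.length_simple, add_comm])

lemma simple_mul_of_isLeftDescent {i : B} {y : W} (h : cs.IsLeftDescent y i) :
    b (cs.simple i) * b y =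
      (T (-2) : ℤ[T;T⁻¹]) • b (cs.simple i * y) + (T (-2) - 1 : ℤ[T;T⁻¹]) • b y := by
  have hy : b (cs.simple i) * b (cs.simple i * y) = b y := by
    simpa using hb.simple_mul_of_not_isLeftDescent
      (cs.isLeftDescent_iff_not_isLeftDescent_mul.mp h)
  rw [← hy, ← mul_assoc, hb.simple_mul_self, add_mul, smul_mul_assoc, smul_mul_assoc, one_mul,
    hy]

lemma klSimple_mul_basis (i : B) (y : W) :
    klSimple cs b i * b y =
      (T (cs.ascentSign i y) : ℤ[T;T⁻¹]) • (b (cs.simple i * y) + b y) := by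
  by_cases h : cs.IsLeftDescent y i
  · rw [klSimple, smul_mul_assoc, add_mul, one_mul, hb.simple_mul_of_isLeftDescent h,
      CoxeterSystem.ascentSign, if_pos h, add_assoc, sub_smul, one_smul, sub_add_cancel,
      ← smul_add, smul_smul, ← T_add]
    norm_num
  · rw [klSimple, smul_mul_assoc, add_mul, one_mul, hb.simple_mul_of_not_isLeftDescent h,
      CoxeterSystem.ascentSign, if_neg h]

lemma repr_klSimple_mul (i : B) (C : H) (z : W) :
    b.repr (klSimple cs b i * C) z =
      T (cs.ascentSign i z) * b.repr C z +
        T (-cs.ascentSign i z) * b.repr C (cs.simple i * z) := by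
  have key : (b.coord z).comp (LinearMap.mulLeft _ (klSimple cs b i)) =
      (T (cs.ascentSign i z) : ℤ[T;T⁻¹]) • b.coord z +
        (T (-cs.ascentSign i z) : ℤ[T;T⁻¹]) • b.coord (cs.simple i * z) := by
    refine b.ext fun y => ?_
    have hsy : cs.simple i * y ≠ y := fun h => cs.length_simple_mul_ne y i (congrArg _ h)
    simp only [LinearMap.comp_apply, LinearMap.mulLeft_apply, hb.klSimple_mul_basis,
      LinearMap.add_apply, LinearMap.smul_apply, Module.Basis.coord_apply, map_smul, map_add,
      Module.Basis.repr_self, smul_eq_mul]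
    by_cases hyz : y = z
    · subst hyz
      simp [hsy, hsy.symm]
    · by_cases hsyz : cs.simple i * y = z
      · subst hsyz
        simp [hyz, cs.ascentSign_simple_mul]
      · have : y ≠ cs.simple i * z := by rintro rfl; simp at hsyz
        simp [hyz, hsyz, this]
  simpa using LinearMap.congr_fun key C

lemma tildeCoeff_klSimple_mul (i : B) (C : H) (z : W) :
    tildeCoeff cs b z (klSimple cs b i * C) =
      T (cs.ascentSign i z) * tildeCoeff cs b z C + tildeCoeff cs b (cs.simple i * z) C := by
  simp only [tildeCoeff_apply, hb.repr_klSimple_mul, cs.length_simple_mul_eq_add_ascentSign,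
    mul_add, ← mul_assoc, ← T_add]
  rw [neg_add, add_comm (cs.ascentSign i z)]

end IsHeckeBasis

variable (cs b) in
noncomputable def lowSpan (n : ℕ) : Submodule (ℤ[T;T⁻¹]) H :=
  Submodule.span _ (b '' {z | cs.length z < n})

lemma basis_mem_lowSpan {n : ℕ} {z : W} (hz : cs.length z < n) : b z ∈ lowSpan cs b n :=
  Submodule.subset_span ⟨z, hz, rfl⟩

lemma lowSpan_mono {m n : ℕ} (h : m ≤ n) : lowSpan cs b m ≤ lowSpan cs b n :=
  Submodule.span_mono (Set.image_mono fun _ hz => lt_of_lt_of_le hz h)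

lemma repr_eq_zero_of_mem_lowSpan {n : ℕ} {p : H} (hp : p ∈ lowSpan cs b n) {y : W}
    (hy : n ≤ cs.length y) : b.repr p y = 0 := by
  have hle : lowSpan cs b n ≤ LinearMap.ker (b.coord y) := by
    refine Submodule.span_le.mpr ?_
    rintro _ ⟨z, hz, rfl⟩
    have : z ≠ y := by rintro rfl; exact absurd hz (not_lt.mpr hy)
    simp [this]
  exact hle hp

lemma IsHeckeBasis.simple_mul_mem_lowSpan (hb : IsHeckeBasis cs b) (i : B) {n : ℕ} {p : H}
    (hp : p ∈ lowSpan cs b n) : b (cs.simple i) * p ∈ lowSpan cs b (n + 1) := by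
  refine (Submodule.span_le (p := (lowSpan cs b (n + 1)).comap
    (LinearMap.mulLeft _ (b (cs.simple i))))).mpr ?_ hp
  rintro _ ⟨z, hz, rfl⟩
  replace hz : cs.length z < n := hz
  change b (cs.simple i) * b z ∈ lowSpan cs b (n + 1)
  have hsz := cs.length_simple_mul z i
  by_cases h : cs.IsLeftDescent z i
  · rw [hb.simple_mul_of_isLeftDescent h]
    exact add_mem (Submodule.smul_mem _ _ (basis_mem_lowSpan (by omega)))
      (Submodule.smul_mem _ _ (basis_mem_lowSpan (by omega)))
  · rw [hb.simple_mul_of_not_isLeftDescent h]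
    exact basis_mem_lowSpan (by omega)

namespace IsKLInvolution

variable {d : H →+* H} (hd : IsKLInvolution b d) (hb : IsHeckeBasis cs b)
include hd hb

lemma map_simple (i : B) :
    d (b (cs.simple i)) =
      (T 2 : ℤ[T;T⁻¹]) • b (cs.simple i) + (T 2 - 1 : ℤ[T;T⁻¹]) • 1 := by
  set X := (T 2 : ℤ[T;T⁻¹]) • b (cs.simple i) + (T 2 - 1 : ℤ[T;T⁻¹]) • 1
  have hT : (T 2 * T (-2) : ℤ[T;T⁻¹]) = 1 := by rw [← T_add]; exact T_zero
  have hX : X * b (cs.simple i) = 1 := by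
    rw [add_mul, smul_mul_assoc, smul_mul_assoc, one_mul, hb.simple_mul_self, smul_add,
      smul_smul, smul_smul, hT, one_smul, add_assoc, ← add_smul, mul_sub, hT]
    simp
  have h := hd.basis_inv_mul (cs.simple i)
  rw [cs.inv_simple] at h
  calc d (b (cs.simple i)) = X * b (cs.simple i) * d (b (cs.simple i)) := by rw [hX, one_mul]
    _ = X := by rw [mul_assoc, h, mul_one]

lemma map_klSimple (i : B) : d (klSimple cs b i) = klSimple cs b i := by
  rw [klSimple, hd.map_smul_invert, map_add, map_one, hd.map_simple hb, invert_T, add_assoc,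
    sub_smul, one_smul, sub_add_cancel, ← smul_add, smul_smul, ← T_add]
  norm_num

lemma map_basis_sub_mem_lowSpan (w : W) :
    d (b w) - (T (2 * (cs.length w : ℤ)) : ℤ[T;T⁻¹]) • b w ∈
      lowSpan cs b (cs.length w) := by
  induction hn : cs.length w generalizing w with
  | zero =>
    rw [cs.length_eq_zero_iff.mp hn, hb.one]
    simp
  | succ n ih =>
    obtain ⟨i, hi⟩ := cs.exists_leftDescent_of_ne_one (w := w) (by rintro rfl; simp at hn)
    have hlen : cs.length (cs.simple i * w) = n := by
      have := cs.isLeftDescent_iff.mp hi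
      omega
    have hw : b (cs.simple i) * b (cs.simple i * w) = b w := by
      simpa using hb.simple_mul_of_not_isLeftDescent
        (cs.isLeftDescent_iff_not_isLeftDescent_mul.mp hi)
    set E := d (b (cs.simple i * w)) - (T (2 * (n : ℤ)) : ℤ[T;T⁻¹]) • b (cs.simple i * w)
    have hE : E ∈ lowSpan cs b n := by simpa [E, hlen] using ih _ hlen
    have hexpand : d (b w) - (T (2 * ((n + 1 : ℕ) : ℤ)) : ℤ[T;T⁻¹]) • b w =
        (T 2 : ℤ[T;T⁻¹]) • (b (cs.simple i) * E) + (T 2 - 1 : ℤ[T;T⁻¹]) • E +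
          ((T 2 - 1) * T (2 * (n : ℤ)) : ℤ[T;T⁻¹]) • b (cs.simple i * w) := by
      have hdsw : d (b (cs.simple i * w)) =
          (T (2 * (n : ℤ)) : ℤ[T;T⁻¹]) • b (cs.simple i * w) + E := by simp [E]
      conv_lhs => rw [← hw, map_mul, hd.map_simple hb, hdsw]
      rw [show 2 * ((n + 1 : ℕ) : ℤ) = 2 + 2 * n by push_cast; ring, T_add]
      simp only [add_mul, mul_add, smul_mul_assoc, mul_smul_comm, one_mul, hw]
      module
    rw [hexpand]
    refine add_mem (add_mem ?_ ?_) ?_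
    · exact Submodule.smul_mem _ _ (hb.simple_mul_mem_lowSpan i hE)
    · exact Submodule.smul_mem _ _ (lowSpan_mono (Nat.le_succ n) hE)
    · exact Submodule.smul_mem _ _ (basis_mem_lowSpan (by omega))

lemma repr_map_basis {z y : W} (hzy : cs.length z ≤ cs.length y) :
    b.repr (d (b z)) y = Finsupp.single z (T (2 * (cs.length z : ℤ))) y := by
  have h := repr_eq_zero_of_mem_lowSpan (hd.map_basis_sub_mem_lowSpan hb z) hzy
  rwa [map_sub, Finsupp.sub_apply, sub_eq_zero, _root_.map_smul, b.repr_self,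
    Finsupp.smul_single, smul_eq_mul, mul_one] at h

lemma repr_map_of_length_le {D : H} {y : W}
    (hy : ∀ z, b.repr D z ≠ 0 → cs.length z ≤ cs.length y) :
    b.repr (d D) y = invert (b.repr D y) * T (2 * (cs.length y : ℤ)) := by
  conv_lhs => rw [← b.linearCombination_repr D, Finsupp.linearCombination_apply, Finsupp.sum,
    map_sum, map_sum]
  rw [Finset.sum_apply', Finset.sum_eq_single y]
  · rw [hd.map_smul_invert, _root_.map_smul, Finsupp.smul_apply, smul_eq_mul,
      hd.repr_map_basis hb le_rfl, Finsupp.single_eq_same]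
  · intro z hz hzy
    rw [hd.map_smul_invert, _root_.map_smul, Finsupp.smul_apply, smul_eq_mul,
      hd.repr_map_basis hb (hy z (Finsupp.mem_support_iff.mp hz)),
      Finsupp.single_eq_of_ne' hzy, mul_zero]
  · intro hy
    rw [Finsupp.notMem_support_iff.mp hy]
    simp

lemma eq_zero_of_map_eq_of_tildeCoeff_mem {D : H} (hD : d D = D)
    (hcoeff : ∀ y, tildeCoeff cs b y D ∈ vZv) : D = 0 := by
  by_contra hne
  have hsupp : (b.repr D).support.Nonempty := by
    simpa [Finsupp.support_nonempty_iff] using hne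
  obtain ⟨y, hy, hmax⟩ := (b.repr D).support.exists_max_image cs.length hsupp
  have hfix : b.repr D y = invert (b.repr D y) * T (2 * (cs.length y : ℤ)) := by
    rw [← hd.repr_map_of_length_le hb fun z hz => hmax z (Finsupp.mem_support_iff.mpr hz), hD]
  have hinv : invert (tildeCoeff cs b y D) = tildeCoeff cs b y D := by
    rw [tildeCoeff_apply, map_mul, invert_T, neg_neg]
    nth_rewrite 2 [hfix]
    rw [mul_left_comm, ← T_add, mul_comm]
    congr 2
    ring
  have h0 := eq_zero_of_mem_vZv_of_invert_eq (hcoeff y) hinv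
  rw [tildeCoeff_apply, (isUnit_T _).mul_right_eq_zero] at h0
  exact Finsupp.mem_support_iff.mp hy h0

end IsKLInvolution

variable {d : H →+* H}

variable (cs b d) in
/-- For `N = vZv` these are the defining conditions of `C'_x`; `N = Zv` is the intermediate stage
of the existence proof. -/
structure IsSelfDualUnitriangular (N : Submodule ℤ (ℤ[T;T⁻¹])) (x : W) (C : H) :
    Prop where
  map_eq : d C = C
  repr_eq_zero : ∀ y, ¬bruhatLE cs y x → b.repr C y = 0
  repr_self : b.repr C x = T (cs.length x : ℤ)
  tildeCoeff_mem : ∀ y, bruhatLE cs y x → y ≠ x → tildeCoeff cs b y C ∈ N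

namespace IsSelfDualUnitriangular

variable {N : Submodule ℤ (ℤ[T;T⁻¹])} {x : W} {C : H}

lemma tildeCoeff_self (h : IsSelfDualUnitriangular cs b d N x C) : tildeCoeff cs b x C = 1 := by
  rw [tildeCoeff_apply, h.repr_self, ← T_add, neg_add_cancel, T_zero]

lemma tildeCoeff_mem_of_ne (h : IsSelfDualUnitriangular cs b d N x C) {y : W} (hy : y ≠ x) :
    tildeCoeff cs b y C ∈ N := by
  by_cases hyx : bruhatLE cs y x
  · exact h.tildeCoeff_mem y hyx hy
  · rw [tildeCoeff_apply, h.repr_eq_zero y hyx, mul_zero]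
    exact N.zero_mem

lemma tildeCoeff_sub_single_mem (h : IsSelfDualUnitriangular cs b d N x C) (y : W) :
    tildeCoeff cs b y C - Finsupp.single x 1 y ∈ N := by
  by_cases hy : y = x
  · subst hy
    rw [h.tildeCoeff_self, Finsupp.single_eq_same, sub_self]
    exact N.zero_mem
  · rw [Finsupp.single_eq_of_ne hy, sub_zero]
    exact h.tildeCoeff_mem_of_ne hy

lemma tildeCoeff_mem_Zv (h : IsSelfDualUnitriangular cs b d vZv x C) (y : W) :
    tildeCoeff cs b y C ∈ Zv := by
  by_cases hy : y = x
  · rw [hy, h.tildeCoeff_self]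
    exact one_mem_Zv
  · exact vZv_le_Zv (h.tildeCoeff_mem_of_ne hy)

lemma eq (hb : IsHeckeBasis cs b) (hd : IsKLInvolution b d) {C₁ C₂ : H}
    (h₁ : IsSelfDualUnitriangular cs b d vZv x C₁)
    (h₂ : IsSelfDualUnitriangular cs b d vZv x C₂) :
    C₁ = C₂ := by
  rw [← sub_eq_zero]
  refine hd.eq_zero_of_map_eq_of_tildeCoeff_mem hb (by rw [map_sub, h₁.map_eq, h₂.map_eq])
    fun y => ?_
  rw [map_sub, ← sub_sub_sub_cancel_right _ _ (Finsupp.single x 1 y)]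
  exact sub_mem (h₁.tildeCoeff_sub_single_mem y) (h₂.tildeCoeff_sub_single_mem y)

lemma one (hb : IsHeckeBasis cs b) : IsSelfDualUnitriangular cs b d vZv 1 1 where
  map_eq := map_one d
  repr_eq_zero y hy := by
    rw [← hb.one, b.repr_self, Finsupp.single_eq_of_ne]
    rintro rfl
    exact hy (cs.bruhatLE_refl 1)
  repr_self := by simp [← hb.one]
  tildeCoeff_mem y hy hne := by
    have := (cs.eq_or_length_lt_of_bruhatLE hy).resolve_left hne
    simp at this

lemma klSimple_mul (hb : IsHeckeBasis cs b) (hd : IsKLInvolution b d)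
    (h : IsSelfDualUnitriangular cs b d vZv x C) {i : B} (hi : ¬cs.IsLeftDescent x i) :
    IsSelfDualUnitriangular cs b d Zv (cs.simple i * x) (klSimple cs b i * C) where
  map_eq := by rw [map_mul, hd.map_klSimple hb, h.map_eq]
  repr_eq_zero y hy := by
    rw [hb.repr_klSimple_mul, h.repr_eq_zero y, h.repr_eq_zero (cs.simple i * y), mul_zero,
      mul_zero, add_zero]
    · exact fun hsy => hy (cs.bruhatLE_simple_mul_of_simple_mul_bruhatLE hsy hi)
    · exact fun hyx => hy (cs.bruhatLE_trans hyx (cs.bruhatLE_simple_mul hi))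
  repr_self := by
    have hlen := cs.not_isLeftDescent_iff.mp hi
    have hnot : ¬bruhatLE cs (cs.simple i * x) x := fun hle => by
      have := cs.length_le_of_bruhatLE hle
      omega
    rw [hb.repr_klSimple_mul, cs.ascentSign_simple_mul, CoxeterSystem.ascentSign, if_neg hi,
      cs.simple_mul_simple_cancel_left, h.repr_eq_zero _ hnot, h.repr_self, mul_zero, zero_add,
      neg_neg, ← T_add, hlen, add_comm]
    push_cast
    rfl
  tildeCoeff_mem y _ _ := by
    rw [hb.tildeCoeff_klSimple_mul]
    refine add_mem ?_ (h.tildeCoeff_mem_Zv _)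
    by_cases hy : cs.IsLeftDescent y i
    · rw [CoxeterSystem.ascentSign, if_pos hy]
      exact T_neg_one_mul_mem_Zv (h.tildeCoeff_mem_of_ne (by rintro rfl; exact hi hy))
    · rw [CoxeterSystem.ascentSign, if_neg hy]
      exact vZv_le_Zv (T_one_mul_mem_vZv (h.tildeCoeff_mem_Zv y))

/-- Subtracting `μ_z C'_z`, with `μ_z` the constant term of `h_z(C)`, removes that constant term
and changes every other `h_y` only modulo `vℤ[v]`. -/
lemma sub_sum_smul [DecidableEq W] (hE : IsSelfDualUnitriangular cs b d Zv x C) {F : W → H}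
    (hF : ∀ z, cs.length z < cs.length x → IsSelfDualUnitriangular cs b d vZv z (F z)) :
    IsSelfDualUnitriangular cs b d vZv x
      (C - ∑ z ∈ (b.repr C).support.erase x, (tildeCoeff cs b z C).coeff 0 • F z) := by
  set S := (b.repr C).support.erase x
  set μ : W → ℤ := fun z => (tildeCoeff cs b z C).coeff 0
  have hS : ∀ z ∈ S, bruhatLE cs z x ∧ cs.length z < cs.length x := fun z hz => by
    obtain ⟨hzx, hz⟩ := Finset.mem_erase.mp hz
    have hle : bruhatLE cs z x := by
      by_contra hle
      exact Finsupp.mem_support_iff.mp hz (hE.repr_eq_zero z hle)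
    exact ⟨hle, (cs.eq_or_length_lt_of_bruhatLE hle).resolve_left hzx⟩
  have hrepr : ∀ y, b.repr (C - ∑ z ∈ S, μ z • F z) y =
      b.repr C y - ∑ z ∈ S, μ z • b.repr (F z) y := fun y => by
    simp only [map_sub, map_sum, map_zsmul, Finsupp.sub_apply, Finset.sum_apply',
      Finsupp.smul_apply]
  refine ⟨?_, fun y hy => ?_, ?_, fun y hyx hne => ?_⟩
  · rw [map_sub, map_sum, hE.map_eq]
    congr 1
    exact Finset.sum_congr rfl fun z hz => by rw [map_zsmul, (hF z (hS z hz).2).map_eq]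
  · rw [hrepr, hE.repr_eq_zero y hy, zero_sub, neg_eq_zero]
    refine Finset.sum_eq_zero fun z hz => ?_
    rw [(hF z (hS z hz).2).repr_eq_zero y fun hyz => hy (cs.bruhatLE_trans hyz (hS z hz).1),
      smul_zero]
  · rw [hrepr, hE.repr_self, sub_eq_self]
    refine Finset.sum_eq_zero fun z hz => ?_
    rw [(hF z (hS z hz).2).repr_eq_zero x fun hxz => absurd (cs.length_le_of_bruhatLE hxz)
      (not_le.mpr (hS z hz).2), smul_zero]
  · have hsingle : ∑ z ∈ S, μ z • Finsupp.single z (1 : ℤ[T;T⁻¹]) y =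
        (μ y : ℤ[T;T⁻¹]) := by
      rw [Finset.sum_eq_single y (fun z _ hzy => by rw [Finsupp.single_eq_of_ne' hzy, smul_zero])]
      · rw [Finsupp.single_eq_same, zsmul_one]
      · intro hyS
        have hy : b.repr C y = 0 :=
          Finsupp.notMem_support_iff.mp fun hy => hyS (Finset.mem_erase.mpr ⟨hne, hy⟩)
        simp [μ, hy]
    have hsplit : tildeCoeff cs b y (C - ∑ z ∈ S, μ z • F z) =
        (tildeCoeff cs b y C - (μ y : ℤ[T;T⁻¹])) -
          ∑ z ∈ S, μ z • (tildeCoeff cs b y (F z) - Finsupp.single z 1 y) := by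
      simp only [map_sub, map_sum, map_zsmul, smul_sub, Finset.sum_sub_distrib, hsingle]
      abel
    rw [hsplit]
    exact sub_mem (sub_coeff_zero_mem_vZv (hE.tildeCoeff_mem y hyx hne))
      (sum_mem fun z hz => Submodule.smul_mem _ _ ((hF z (hS z hz).2).tildeCoeff_sub_single_mem y))

end IsSelfDualUnitriangular

theorem exists_isSelfDualUnitriangular (hb : IsHeckeBasis cs b) (hd : IsKLInvolution b d)
    (x : W) : ∃ C, IsSelfDualUnitriangular cs b d vZv x C := by
  classical
  induction hn : cs.length x using Nat.strong_induction_on generalizing x with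
  | _ n ih =>
  by_cases hx : x = 1
  · exact ⟨1, hx ▸ IsSelfDualUnitriangular.one hb⟩
  obtain ⟨i, hi⟩ := cs.exists_leftDescent_of_ne_one hx
  have hlen : cs.length (cs.simple i * x) < n := by
    have := cs.isLeftDescent_iff.mp hi
    omega
  obtain ⟨C', hC'⟩ := ih _ hlen (cs.simple i * x) rfl
  have hE := hC'.klSimple_mul hb hd (cs.isLeftDescent_iff_not_isLeftDescent_mul.mp hi)
  rw [cs.simple_mul_simple_cancel_left] at hE
  have hlower : ∀ z, ∃ Cz, cs.length z < n → IsSelfDualUnitriangular cs b d vZv z Cz :=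
    fun z => if hz : cs.length z < n then (ih _ hz z rfl).imp fun _ h _ => h
      else ⟨0, fun h => absurd h hz⟩
  choose F hF using hlower
  exact ⟨_, hE.sub_sum_smul fun z hz => hF z (hn ▸ hz)⟩

end HeckeAlgebra

theorem stmt9_general {B W : Type} [Group W] (M : CoxeterMatrix B) (cs : CoxeterSystem M W)
    {H : Type} [Ring H] [Algebra (LaurentPolynomial ℤ) H]
    (b : Module.Basis W (LaurentPolynomial ℤ) H)
    (hone : b 1 = 1)
    (hmul : ∀ x y : W, cs.length (x * y) = cs.length x + cs.length y →
      b x * b y = b (x * y))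
    (hquad : ∀ i : B, b (cs.simple i) * b (cs.simple i) =
      (T (-2) : LaurentPolynomial ℤ) • (1 : H) +
        ((T (-2) - 1 : LaurentPolynomial ℤ)) • b (cs.simple i))
    (d : H →+* H)
    (hd_smul : ∀ (r : LaurentPolynomial ℤ) (x : H),
      d (r • x) = (invert r : LaurentPolynomial ℤ) • d x)
    (hd_basis : ∀ w : W, d (b w) * b w⁻¹ = 1 ∧ b w⁻¹ * d (b w) = 1) :
    ∀ x : W, ∃! C : H,
      d C = C ∧
      (∀ y : W, ¬ bruhatLE cs y x → b.repr C y = 0) ∧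
      b.repr C x = T (cs.length x : ℤ) ∧
      (∀ y : W, bruhatLE cs y x → y ≠ x →
        T (-(cs.length y : ℤ)) * b.repr C y ∈ vZv) := by
  intro x
  have hb : IsHeckeBasis cs b := ⟨hone, hmul, hquad⟩
  have hd : IsKLInvolution b d := ⟨hd_smul, fun w => (hd_basis w).2⟩
  obtain ⟨C, hC⟩ := exists_isSelfDualUnitriangular hb hd x
  refine ⟨C, ⟨hC.map_eq, hC.repr_eq_zero, hC.repr_self, hC.tildeCoeff_mem⟩, ?_⟩
  rintro C' ⟨hmap, hzero, hself, hmem⟩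
  exact IsSelfDualUnitriangular.eq hb hd ⟨hmap, hzero, hself, hmem⟩ hC

/-- **Kazhdan–Lusztig basis.** Let `H` be the Hecke algebra of a Coxeter system
over `ℤ[v,v⁻¹]` (basis `{T_w = b w}`, `T_e = 1`, standard relations) with Kazhdan–Lusztig
involution `d` (a ring homomorphism, semilinear over `v ↦ v⁻¹`, `d(T_w) = (T_{w⁻¹})⁻¹`,
`d² = id`).  Writing elements as `C = Σ_y h_{y}(v)·T̃_y` with `T̃_y = v^{l(y)} T_y` (so that
the coefficient of `T_y` in `C` is `v^{l(y)} h_y`, i.e. `h_y = v^{-l(y)}·(b.repr C) y`), for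
every `x ∈ W` there is a unique `C'_x = C ∈ H` such that:
(1) `d(C) = C`;
(2) `h_y = 0` unless `y ≤ x` in Bruhat order, and `h_x = 1`;
(3) `h_y ∈ vℤ[v]` for `y < x`. -/
theorem stmt9 {B W : Type} [Group W] (M : CoxeterMatrix B) (cs : CoxeterSystem M W)
    {H : Type} [Ring H] [Algebra (LaurentPolynomial ℤ) H]
    (b : Module.Basis W (LaurentPolynomial ℤ) H)
    (hone : b 1 = 1)
    (hmul : ∀ x y : W, cs.length (x * y) = cs.length x + cs.length y →
      b x * b y = b (x * y))
    (hquad : ∀ i : B, b (cs.simple i) * b (cs.simple i) =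
      (T (-2) : LaurentPolynomial ℤ) • (1 : H) +
        ((T (-2) - 1 : LaurentPolynomial ℤ)) • b (cs.simple i))
    (d : H →+* H)
    (hd_smul : ∀ (r : LaurentPolynomial ℤ) (x : H),
      d (r • x) = (invert r : LaurentPolynomial ℤ) • d x)
    (hd_basis : ∀ w : W, d (b w) * b w⁻¹ = 1 ∧ b w⁻¹ * d (b w) = 1)
    (hd_invol : ∀ x : H, d (d x) = x) :
    ∀ x : W, ∃! C : H,
      d C = C ∧
      (∀ y : W, ¬ bruhatLE cs y x → b.repr C y = 0) ∧
      b.repr C x = T (cs.length x : ℤ) ∧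
      (∀ y : W, bruhatLE cs y x → y ≠ x →
        T (-(cs.length y : ℤ)) * b.repr C y ∈ vZv) :=
  stmt9_general M cs b hone hmul hquad d hd_smul hd_basis
end

section
/- Let S be a polynomial ring over ℝ graded with variables in degree 2, let α_1,…,α_k ∈ S be homogeneous of degree 2, and let ρ : S → ℝ[T] be a graded algebra surjection with ρ(α_i) ≠ 0 for all i (with deg T = 2). Let M' ⊆ M be graded free S-modules of the same finite rank such that α_1⋯α_k·M ⊆ M'. Then the induced map of ℝ[T]-modules M'⊗_S ℝ[T] → M⊗_S ℝ[T] is injective, and the cokernel (M/M')⊗_S ℝ[T] is a torsion ℝ[T]-module killed by T^k. -/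
open MvPolynomial

/-- Let `S = ℝ[x₁,…,x_d] = Sym(V)` be graded with the variables in degree
`2`, let `α 1, …, α kk ∈ S` be homogeneous of internal degree `2` (polynomial degree `1`), and
let `ρ : S → ℝ[T]` be a graded algebra surjection (`deg T = 2`: homogeneous elements of
polynomial degree `m` map into `ℝ·T^m`) with `ρ (α i) ≠ 0` for all `i` (restriction to a line
not contained in any of the hyperplanes `α i = 0`).  Let `M' ⊆ M` be graded free `S`-modules
of the same finite rank `n`, the inclusion being given by the matrix `g` (so `M' = g(S^n)`),
with `α 1 ⋯ α kk · M ⊆ M'`.  Then the induced map of `ℝ[T]`-modules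
`M' ⊗_S ℝ[T] → M ⊗_S ℝ[T]` (given by the matrix `ρ(g)`) is injective, and the cokernel
`(M/M') ⊗_S ℝ[T]` is a torsion `ℝ[T]`-module killed by `T^kk`. -/
theorem stmt14 (d n kk : ℕ) (α : Fin kk → MvPolynomial (Fin d) ℝ)
    (ρ : MvPolynomial (Fin d) ℝ →ₐ[ℝ] Polynomial ℝ)
    (hρsurj : Function.Surjective ρ)
    (hρgraded : ∀ (p : MvPolynomial (Fin d) ℝ) (m : ℕ), p.IsHomogeneous m →
      ∃ c : ℝ, ρ p = Polynomial.C c * Polynomial.X ^ m)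
    (hα : ∀ i, (α i).IsHomogeneous 1)
    (hρα : ∀ i, ρ (α i) ≠ 0)
    (g : Matrix (Fin n) (Fin n) (MvPolynomial (Fin d) ℝ))
    (hinj : Function.Injective g.mulVec)
    (hsub : ∀ u : Fin n → MvPolynomial (Fin d) ℝ,
      ∃ w : Fin n → MvPolynomial (Fin d) ℝ,
        g.mulVec w = fun j => (∏ i, α i) * u j) :
    Function.Injective (g.map ρ).mulVec ∧
    ∀ u : Fin n → Polynomial ℝ, ∃ w : Fin n → Polynomial ℝ,
      (g.map ρ).mulVec w = fun j => Polynomial.X ^ kk * u j := by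
  classical
  set P : MvPolynomial (Fin d) ℝ := ∏ i, α i with hP
  -- a quasi-inverse matrix h with g * h = P • 1
  choose hc hcspec using fun j : Fin n => hsub (Pi.single j 1)
  set h : Matrix (Fin n) (Fin n) (MvPolynomial (Fin d) ℝ) :=
    Matrix.of fun i j => hc j i with hh
  have hgh : g * h = P • (1 : Matrix (Fin n) (Fin n) (MvPolynomial (Fin d) ℝ)) := by
    ext i j
    have h1 : (g * h) i j = g.mulVec (hc j) i := by
      simp [Matrix.mul_apply, Matrix.mulVec, dotProduct, hh]
    rw [h1, hcspec j]
    simp [Pi.single_apply, Matrix.one_apply, eq_comm, mul_comm]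
  have hρP : ρ P ≠ 0 := by
    rw [hP, map_prod]
    exact Finset.prod_ne_zero_iff.mpr fun i _ => hρα i
  have hdet : (g.map ρ).det * (h.map ρ).det = (ρ P) ^ n := by
    have h2 : g.det * h.det = P ^ n := by
      have := congrArg Matrix.det hgh
      rwa [Matrix.det_mul, Matrix.det_smul, Matrix.det_one, mul_one,
        Fintype.card_fin] at this
    have h3 := congrArg ρ h2
    rw [map_mul, map_pow] at h3
    rw [AlgHom.map_det ρ g, AlgHom.map_det ρ h,
      AlgHom.mapMatrix_apply, AlgHom.mapMatrix_apply] at h3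
    exact h3
  have hdg : (g.map ρ).det ≠ 0 := by
    intro h0
    rw [h0, zero_mul] at hdet
    exact pow_ne_zero n hρP hdet.symm
  constructor
  · -- injectivity
    have hker : ∀ v, (g.map ρ).mulVec v = 0 → v = 0 := by
      intro v hv
      have h1 : ((g.map ρ).adjugate * (g.map ρ)).mulVec v = 0 := by
        rw [← Matrix.mulVec_mulVec, hv, Matrix.mulVec_zero]
      rw [Matrix.adjugate_mul, Matrix.smul_mulVec, Matrix.one_mulVec] at h1
      funext j
      have h2 := congrFun h1 j
      simp only [Pi.smul_apply, smul_eq_mul, Pi.zero_apply] at h2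
      exact (mul_eq_zero.mp h2).resolve_left hdg
    intro v w hvw
    have h3 : (g.map ρ).mulVec (v - w) = 0 := by
      rw [Matrix.mulVec_sub, hvw, sub_self]
    exact sub_eq_zero.mp (hker _ h3)
  · -- surjectivity onto X^kk • M
    intro u
    choose v hv using fun j => hρsurj (u j)
    obtain ⟨w0, hw0⟩ := hsub v
    choose c hcα using fun i => hρgraded (α i) 1 (hα i)
    have hcne : ∀ i, c i ≠ 0 := by
      intro i hi
      apply hρα i
      rw [hcα i, hi]
      simp
    set cc : ℝ := ∏ i, c i with hcc
    have hccne : cc ≠ 0 := Finset.prod_ne_zero_iff.mpr fun i _ => hcne i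
    have hρPval : ρ P = Polynomial.C cc * Polynomial.X ^ kk := by
      rw [hP, map_prod]
      simp_rw [hcα]
      rw [Finset.prod_mul_distrib,
        show (∏ x : Fin kk, Polynomial.C (c x)) = Polynomial.C cc from
          (map_prod Polynomial.C c Finset.univ).symm]
      simp [Finset.prod_const]
    refine ⟨fun k => Polynomial.C cc⁻¹ * ρ (w0 k), ?_⟩
    funext j
    have hkey : (g.map ρ).mulVec (fun k => Polynomial.C cc⁻¹ * ρ (w0 k)) j
        = Polynomial.C cc⁻¹ * ρ (g.mulVec w0 j) := by
      simp [Matrix.mulVec, dotProduct, map_sum, Finset.mul_sum]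
      exact Finset.sum_congr rfl fun k _ => by ring
    rw [hkey, hw0]
    simp only
    rw [map_mul, hρPval, hv j]
    rw [show Polynomial.C cc⁻¹ * (Polynomial.C cc * Polynomial.X ^ kk * u j)
        = (Polynomial.C cc⁻¹ * Polynomial.C cc) * (Polynomial.X ^ kk * u j) by ring,
      ← Polynomial.C_mul, inv_mul_cancel₀ hccne, Polynomial.C_1, one_mul]
end
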